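/- Let G = (V, E) be a finite directed graph and s, t ∈ V. Define the set of tile types T over colors V ∪ {white} (with left and right colors always white, so only up/down matter) consisting of: a tile with up = white and down = s; a tile with up = s and down = s; a tile with up = t and down = white; and for each edge (u,v) ∈ E, a tile with up = u and down = v. Then there exists a directed path from s to t in G if and only if for some positive integer h there is a T-tiling of the h × 1 rectangle. -/
import Mathlib


structure Tile (C : Type) where
  left : C
  up : C
  right : C
  down : C
deriving DecidableEq

/-- A `T`-tiling of the `H × W` rectangle: all tiles are from `T`, the borders are
white on all four sides, and adjacent tiles match horizontally and vertically. -/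
def IsTiling {C : Type} (white : C) (T : Finset (Tile C)) (H W : ℕ)
    (τ : Fin H → Fin W → Tile C) : Prop :=
  (∀ i j, τ i j ∈ T) ∧
  (∀ i j, j.val = 0 → (τ i j).left = white) ∧
  (∀ i j, j.val = W - 1 → (τ i j).right = white) ∧
  (∀ i j, i.val = 0 → (τ i j).up = white) ∧
  (∀ i j, i.val = H - 1 → (τ i j).down = white) ∧
  (∀ (i : Fin H) (j : Fin W) (h : j.val + 1 < W),
      (τ i j).right = (τ i ⟨j.val + 1, h⟩).left) ∧
  (∀ (i : Fin H) (j : Fin W) (h : i.val + 1 < H),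
      (τ i j).down = (τ ⟨i.val + 1, h⟩ j).up)

/-- A `T`-tiling of the `h × 1` rectangle (a single column): left/right colors of all
tiles are white, top of the first and bottom of the last tile are white, and
consecutive tiles match vertically. -/
def IsColTiling {C : Type} (white : C) (T : Finset (Tile C)) (h : ℕ)
    (τ : Fin h → Tile C) : Prop :=
  (∀ i, τ i ∈ T) ∧
  (∀ i : Fin h, i.val = 0 → (τ i).up = white) ∧
  (∀ i : Fin h, i.val = h - 1 → (τ i).down = white) ∧
  (∀ i, (τ i).left = white) ∧
  (∀ i, (τ i).right = white) ∧
  (∀ (i : Fin h) (hlt : i.val + 1 < h), (τ i).down = (τ ⟨i.val + 1, hlt⟩).up)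

/-- A deterministic set of tile types: there is a partition of the colors
`C = Col ⊔ Colᶜ` with `white ∈ Col` such that tops and bottoms of tiles lie on
opposite sides, and a tile is determined by its (left,up) colors when its left
color is in `Col`, and by its (right,up) colors when its right color is in `Colᶜ`. -/
def Deterministic {C : Type} (white : C) (T : Finset (Tile C)) : Prop :=
  ∃ Col : Set C, white ∈ Col ∧
    (∀ t ∈ T, (t.up ∈ Col ↔ t.down ∉ Col)) ∧
    (∀ c ∈ Col, ∀ c' : C, ∀ t ∈ T, ∀ t' ∈ T,
       t.left = c → t.up = c' → t'.left = c → t'.up = c' → t = t') ∧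
    (∀ c ∉ Col, ∀ c' : C, ∀ t ∈ T, ∀ t' ∈ T,
       t.right = c → t.up = c' → t'.right = c → t'.up = c' → t = t')

/-- Tile types for the reduction from s-t reachability: colors are `Option V`
with `none` playing the role of white. -/
def reachTiles {V : Type} [Fintype V] [DecidableEq V]
    (E : V → V → Prop) [DecidableRel E] (s t : V) : Finset (Tile (Option V)) :=
  ({⟨none, none, none, some s⟩, ⟨none, some s, none, some s⟩,
    ⟨none, some t, none, none⟩} : Finset (Tile (Option V))) ∪
  Finset.image (fun p : V × V => ⟨none, some p.1, none, some p.2⟩)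
    (Finset.univ.filter fun p : V × V => E p.1 p.2)

lemma mem_reachTiles {V : Type} [Fintype V] [DecidableEq V]
    (E : V → V → Prop) [DecidableRel E] (s t : V) (x : Tile (Option V)) :
    x ∈ reachTiles E s t ↔
      x = ⟨none, none, none, some s⟩ ∨ x = ⟨none, some s, none, some s⟩ ∨
      x = ⟨none, some t, none, none⟩ ∨
      ∃ u v, E u v ∧ x = ⟨none, some u, none, some v⟩ := by
  simp only [reachTiles, Finset.mem_union, Finset.mem_insert, Finset.mem_singleton,
    Finset.mem_image, Finset.mem_filter, Finset.mem_univ, true_and, Prod.exists]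
  constructor
  · rintro ((h|h|h) | ⟨u,v,hE,h⟩)
    · exact Or.inl h
    · exact Or.inr (Or.inl h)
    · exact Or.inr (Or.inr (Or.inl h))
    · exact Or.inr (Or.inr (Or.inr ⟨u,v,hE,h.symm⟩))
  · rintro (h|h|h|⟨u,v,hE,h⟩)
    · exact Or.inl (Or.inl h)
    · exact Or.inl (Or.inr (Or.inl h))
    · exact Or.inl (Or.inr (Or.inr h))
    · exact Or.inr ⟨u,v,hE,h.symm⟩

/-- There is a directed path from s to t in G iff some h × 1 rectangle can be
tiled with the reachability tile set. -/
theorem reach_iff_colTiling {V : Type} [Fintype V] [DecidableEq V]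
    (E : V → V → Prop) [DecidableRel E] (s t : V) :
    Relation.ReflTransGen E s t ↔
      ∃ h : ℕ, 0 < h ∧ ∃ τ : Fin h → Tile (Option V),
        IsColTiling none (reachTiles E s t) h τ := by
  constructor
  · intro hreach
    -- partial tilings: top white, sides white, consecutive match, last down = some u
    have key : ∀ u, Relation.ReflTransGen E s u →
        ∃ h : ℕ, ∃ hp : 0 < h, ∃ τ : Fin h → Tile (Option V),
          (∀ i, τ i ∈ reachTiles E s t) ∧
          (∀ i : Fin h, i.val = 0 → (τ i).up = none) ∧
          (∀ i, (τ i).left = none) ∧ (∀ i, (τ i).right = none) ∧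
          (∀ (i : Fin h) (hlt : i.val + 1 < h), (τ i).down = (τ ⟨i.val + 1, hlt⟩).up) ∧
          (τ ⟨h - 1, Nat.sub_lt hp one_pos⟩).down = some u := by
      intro u hu
      induction hu with
      | refl =>
        refine ⟨1, one_pos, fun _ => ⟨none, none, none, some s⟩, ?_, ?_, ?_, ?_, ?_, rfl⟩
        · intro i; rw [mem_reachTiles]; exact Or.inl rfl
        · intro i _; rfl
        · intro i; rfl
        · intro i; rfl
        · intro i hlt; omega
      | @tail a b hab hE ih =>
        obtain ⟨h, hp, τ, hmem, htop, hl, hr, hcons, hlast⟩ := ih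
        refine ⟨h + 1, Nat.succ_pos _,
          fun i => if hi : i.val < h then τ ⟨i.val, hi⟩ else ⟨none, some a, none, some b⟩,
          ?_, ?_, ?_, ?_, ?_, ?_⟩
        · intro i
          by_cases hi : i.val < h
          · simpa [hi] using hmem ⟨i.val, hi⟩
          · simp only [hi, dif_neg, not_false_eq_true]
            rw [mem_reachTiles]
            exact Or.inr (Or.inr (Or.inr ⟨a, b, hE, rfl⟩))
        · intro i hi0
          have hi : i.val < h := by omega
          simp only [dif_pos hi]
          exact htop ⟨i.val, hi⟩ hi0
        · intro i
          by_cases hi : i.val < h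
          · simpa [hi] using hl ⟨i.val, hi⟩
          · simp [hi]
        · intro i
          by_cases hi : i.val < h
          · simpa [hi] using hr ⟨i.val, hi⟩
          · simp [hi]
        · intro i hlt
          have hi : i.val < h := by omega
          by_cases hi1 : i.val + 1 < h
          · simpa [hi, hi1] using hcons ⟨i.val, hi⟩ hi1
          · have : i.val = h - 1 := by omega
            have h1 : ¬ (i.val + 1 < h) := hi1
            simp only [dif_pos hi, dif_neg h1]
            have : (⟨i.val, hi⟩ : Fin h) = ⟨h - 1, Nat.sub_lt hp one_pos⟩ := by
              simp [this]
            rw [this, hlast]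
        · have h1 : ¬ ((h + 1 - 1 : ℕ) < h) := by omega
          simp [h1]
    obtain ⟨h, hp, τ, hmem, htop, hl, hr, hcons, hlast⟩ := key t hreach
    refine ⟨h + 1, Nat.succ_pos _, fun i =>
      if hi : i.val < h then τ ⟨i.val, hi⟩ else ⟨none, some t, none, none⟩,
      ?_, ?_, ?_, ?_, ?_, ?_⟩
    · intro i
      by_cases hi : i.val < h
      · simpa [hi] using hmem ⟨i.val, hi⟩
      · simp only [hi, dif_neg, not_false_eq_true]
        rw [mem_reachTiles]
        exact Or.inr (Or.inr (Or.inl rfl))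
    · intro i hi0
      have hi : i.val < h := by omega
      simpa [hi] using htop ⟨i.val, hi⟩ hi0
    · intro i hi0
      have hi : ¬ (i.val < h) := by omega
      simp [hi]
    · intro i
      by_cases hi : i.val < h
      · simpa [hi] using hl ⟨i.val, hi⟩
      · simp [hi]
    · intro i
      by_cases hi : i.val < h
      · simpa [hi] using hr ⟨i.val, hi⟩
      · simp [hi]
    · intro i hlt
      have hi : i.val < h := by omega
      by_cases hi1 : i.val + 1 < h
      · simpa [hi, hi1] using hcons ⟨i.val, hi⟩ hi1
      · simp only [dif_pos hi, dif_neg hi1]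
        have heq : (⟨i.val, hi⟩ : Fin h) = ⟨h - 1, Nat.sub_lt hp one_pos⟩ := by
          have : i.val = h - 1 := by omega
          simp [this]
        rw [heq, hlast]
  · rintro ⟨h, hp, τ, hmem, htop, hbot, hl, hr, hcons⟩
    -- invariant along the column
    have P : ∀ i (hi : i < h),
        ((τ ⟨i, hi⟩).down = none → Relation.ReflTransGen E s t) ∧
        (∀ u, (τ ⟨i, hi⟩).down = some u → Relation.ReflTransGen E s u) := by
      intro i
      induction i with
      | zero =>
        intro hi
        have hup : (τ ⟨0, hi⟩).up = none := htop ⟨0, hi⟩ rfl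
        rcases (mem_reachTiles E s t _).1 (hmem ⟨0, hi⟩) with hx | hx | hx | ⟨u, v, hE, hx⟩
        · rw [hx]
          exact ⟨fun hc => by simp at hc, fun u hu => by
            simp only at hu
            obtain rfl : s = u := by injection hu
            exact Relation.ReflTransGen.refl⟩
        · rw [hx] at hup; simp at hup
        · rw [hx] at hup; simp at hup
        · rw [hx] at hup; simp at hup
      | succ n ihn =>
        intro hi
        have hn : n < h := by omega
        have hmatch : (τ ⟨n, hn⟩).down = (τ ⟨n + 1, hi⟩).up := hcons ⟨n, hn⟩ hi
        rcases (mem_reachTiles E s t _).1 (hmem ⟨n + 1, hi⟩) with hx | hx | hx | ⟨u, v, hE, hx⟩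
        · -- up = none, down = some s
          rw [hx]
          exact ⟨fun hc => by simp at hc, fun u hu => by
            obtain rfl : s = u := by injection hu
            exact Relation.ReflTransGen.refl⟩
        · -- up = some s, down = some s
          rw [hx] at hmatch ⊢
          have hs : Relation.ReflTransGen E s s := Relation.ReflTransGen.refl
          exact ⟨fun hc => by simp at hc, fun u hu => by
            obtain rfl : s = u := by injection hu
            exact hs⟩
        · -- up = some t, down = none
          rw [hx] at hmatch ⊢
          have hst : Relation.ReflTransGen E s t := (ihn hn).2 t hmatch
          exact ⟨fun _ => hst, fun u hu => by simp at hu⟩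
        · -- edge tile
          rw [hx] at hmatch ⊢
          have hsu : Relation.ReflTransGen E s u := (ihn hn).2 u hmatch
          have hsv : Relation.ReflTransGen E s v := hsu.tail hE
          exact ⟨fun hc => by simp at hc, fun w hw => by
            obtain rfl : v = w := by injection hw
            exact hsv⟩
    have hlt : h - 1 < h := Nat.sub_lt hp one_pos
    exact (P (h - 1) hlt).1 (hbot ⟨h - 1, hlt⟩ rfl)
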